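/- Consider the complete k-ary tree T with ℓ levels of nodes (k ≥ 2), let h̃ : nodes(T) → ℝ, and let h̄ be the unique minimizer of Σ_v (t[v] − h̃[v])² over all t satisfying t[v] = Σ_{u ∈ children(v)} t[u] for every internal node v. Then the value of h̄ at the root r equals h̄[r] = ((k−1)/(k^ℓ − 1)) · Σ_{i=0}^{ℓ−1} k^i · Σ_{v ∈ level(i)} h̃[v], where level(i) denotes the set of nodes at height i+1 (level(0) is the set of leaves and level(ℓ−1) = {r}). -/

import Mathlib

/-!
The minimiser `h̄` is the orthogonal projection of `h̃` onto the subspace of consistent vectors,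
so the residual `h̄ - h̃` is orthogonal to every consistent vector. The vector `w` equal to `k^i`
on `level(i)` is consistent, and every level of a consistent vector sums to its root value.
Pairing `w` with `h̄` and with `h̃` therefore gives
`(Σ_i k^i) · h̄[r] = Σ_i k^i · Σ_{v ∈ level(i)} h̃[v]`, and `Σ_{i<ℓ} k^i = (k^ℓ - 1)/(k - 1)`.
-/

/-- A node of the complete `k`-ary tree with `ℓ` levels of nodes: a depth
`d ∈ {0, …, ℓ−1}` (root depth `0`, leaves depth `ℓ−1`) and an index among the
`k^d` nodes at that depth.  `level(i)` is the set of nodes at depth `ℓ−1−i`. -/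
abbrev TreeNode (k ℓ : ℕ) : Type := Σ d : Fin ℓ, Fin (k ^ (d : ℕ))

/-- The node at depth `d` with index `j`. -/
def mkNode {k ℓ : ℕ} (d : ℕ) (hd : d < ℓ) (j : Fin (k ^ d)) : TreeNode k ℓ := ⟨⟨d, hd⟩, j⟩

/-- The `r`-th child of the node at depth `d` with index `j`. -/
def childNode {k ℓ : ℕ} (d : ℕ) (hd : d + 1 < ℓ) (j : Fin (k ^ d)) (r : Fin k) :
    TreeNode k ℓ :=
  ⟨⟨d + 1, hd⟩, ⟨(j : ℕ) * k + (r : ℕ), by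
    have hj := j.isLt
    have hr := r.isLt
    calc (j : ℕ) * k + (r : ℕ) < ((j : ℕ) + 1) * k := by nlinarith
      _ ≤ k ^ d * k := Nat.mul_le_mul_right _ (by omega)
      _ = k ^ (d + 1) := (pow_succ k d).symm⟩⟩

/-- A node-value vector is consistent if every internal node's value equals the sum of
its children's values. -/
def Consistent {k ℓ : ℕ} (t : TreeNode k ℓ → ℝ) : Prop :=
  ∀ (d : ℕ) (hd : d + 1 < ℓ) (j : Fin (k ^ d)),
    t (mkNode d (by omega) j) = ∑ r : Fin k, t (childNode d hd j r)

theorem sum_mul_sub_eq_zero_of_forall_sum_sq_le {ι : Type*} [Fintype ι] (x b w : ι → ℝ)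
    (hmin : ∀ s : ℝ, ∑ i, (b i - x i) ^ 2 ≤ ∑ i, ((b + s • w) i - x i) ^ 2) :
    ∑ i, w i * (b i - x i) = 0 := by
  set c := ∑ i, w i * (b i - x i)
  have hquad : ∀ s : ℝ, 0 ≤ (∑ i, w i ^ 2) * (s * s) + 2 * c * s + 0 := by
    intro s
    have hexpand : ∑ i, ((b + s • w) i - x i) ^ 2
        = ∑ i, (b i - x i) ^ 2 + ((∑ i, w i ^ 2) * (s * s) + 2 * c * s) := by
      simp only [c, Pi.add_apply, Pi.smul_apply, smul_eq_mul, Finset.sum_mul, Finset.mul_sum,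
        ← Finset.sum_add_distrib]
      exact Finset.sum_congr rfl fun i _ => by ring
    linarith [hmin s]
  have hdisc := discrim_le_zero hquad
  rw [discrim] at hdisc
  nlinarith [sq_nonneg c]

namespace Consistent

variable {k ℓ : ℕ}

theorem add_smul {t w : TreeNode k ℓ → ℝ} (ht : Consistent t) (hw : Consistent w) (s : ℝ) :
    Consistent (t + s • w) := by
  intro d hd j
  simp only [Pi.add_apply, Pi.smul_apply, smul_eq_mul, Finset.sum_add_distrib, ← Finset.mul_sum,
    ht d hd j, hw d hd j]

theorem sum_mul_sub_eq_zero_of_minimizer {x b w : TreeNode k ℓ → ℝ} (hb : Consistent b)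
    (hmin : ∀ t : TreeNode k ℓ → ℝ, Consistent t → ∑ v, (b v - x v) ^ 2 ≤ ∑ v, (t v - x v) ^ 2)
    (hw : Consistent w) :
    ∑ v, w v * (b v - x v) = 0 :=
  sum_mul_sub_eq_zero_of_forall_sum_sq_le x b w fun s => hmin _ (hb.add_smul hw s)

end Consistent

section Levels

variable {k ℓ : ℕ}

def depthWeight (k ℓ : ℕ) (v : TreeNode k ℓ) : ℝ := (k : ℝ) ^ (ℓ - 1 - (v.1 : ℕ))

theorem consistent_depthWeight : Consistent (depthWeight k ℓ) := by
  intro d hd j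
  have hexp : ℓ - 1 - d = (ℓ - 1 - (d + 1)) + 1 := by omega
  simp only [depthWeight, mkNode, childNode, Finset.sum_const, Finset.card_univ, Fintype.card_fin,
    nsmul_eq_mul, hexp, pow_succ, mul_comm]

theorem sum_level_congr (t : TreeNode k ℓ → ℝ) {d n : ℕ} (h : d = n) (hd : d < ℓ) (hn : n < ℓ) :
    ∑ j : Fin (k ^ d), t (mkNode d hd j) = ∑ j : Fin (k ^ n), t (mkNode n hn j) := by
  subst h
  rfl

theorem sum_depthWeight_mul (hℓ : 0 < ℓ) (t : TreeNode k ℓ → ℝ) :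
    ∑ v, depthWeight k ℓ v * t v
      = ∑ i ∈ Finset.range ℓ,
          (k : ℝ) ^ i * ∑ j : Fin (k ^ (ℓ - 1 - i)), t (mkNode (ℓ - 1 - i) (by omega) j) := by
  rw [Fintype.sum_sigma, Finset.sum_range, ← Equiv.sum_comp Fin.revPerm]
  refine Finset.sum_congr rfl fun d _ => ?_
  have hrev : ((Fin.revPerm d : Fin ℓ) : ℕ) = ℓ - 1 - d := by
    rw [Fin.revPerm_apply, Fin.val_rev]; omega
  rw [sum_level_congr t hrev.symm _ (Fin.revPerm d).2]
  simp only [depthWeight, ← Finset.mul_sum]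
  congr 2
  omega

theorem sum_level_succ (t : TreeNode k ℓ → ℝ) (d : ℕ) (hd : d + 1 < ℓ) :
    ∑ j : Fin (k ^ (d + 1)), t (mkNode (d + 1) hd j)
      = ∑ j : Fin (k ^ d), ∑ r : Fin k, t (childNode d hd j r) := by
  rw [← Fintype.sum_prod_type']
  refine (Fintype.sum_equiv (finProdFinEquiv.trans (finCongr (pow_succ k d).symm)) _ _
    fun p => ?_).symm
  simp only [childNode]
  congr 3
  rw [finProdFinEquiv_apply_val]
  ring

theorem Consistent.sum_level_eq_root {t : TreeNode k ℓ → ℝ} (ht : Consistent t) (d : ℕ)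
    (hd : d < ℓ) : ∑ j : Fin (k ^ d), t (mkNode d hd j) = t (mkNode 0 (by omega) ⟨0, by simp⟩) := by
  induction d with
  | zero => exact Fin.sum_univ_one (fun j => t (mkNode 0 hd j))
  | succ d ih =>
    rw [sum_level_succ, ← ih (by omega)]
    exact Finset.sum_congr rfl fun j _ => (ht d hd j).symm

end Levels

/-- **Root value of the minimum `L₂` consistent solution.**
If `h̄` is the unique minimizer of `Σ_v (t[v] − h̃[v])²` over all consistent `t`, then at
the root `r`, `h̄[r] = ((k−1)/(k^ℓ − 1)) · Σ_{i=0}^{ℓ−1} k^i · Σ_{v ∈ level(i)} h̃[v]`,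
where `level(i)` is the set of nodes at depth `ℓ−1−i` (so `level(0)` is the leaves and
`level(ℓ−1)` is the root). -/
theorem tree_inference_root_value (k ℓ : ℕ) (hk : 2 ≤ k) (hℓ : 1 ≤ ℓ)
    (ht hb : TreeNode k ℓ → ℝ)
    (hbcons : Consistent hb)
    (hbmin : ∀ t : TreeNode k ℓ → ℝ, Consistent t →
      ∑ v, (hb v - ht v) ^ 2 ≤ ∑ v, (t v - ht v) ^ 2) :
    hb (mkNode 0 (by omega) ⟨0, by simp⟩)
      = (((k : ℝ) - 1) / ((k : ℝ) ^ ℓ - 1))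
          * ∑ i ∈ Finset.range ℓ,
              (k : ℝ) ^ i * ∑ j : Fin (k ^ (ℓ - 1 - i)), ht (mkNode (ℓ - 1 - i) (by omega) j) := by
  have hk1 : (1 : ℝ) < k := by exact_mod_cast hk
  have hkℓ : (1 : ℝ) < (k : ℝ) ^ ℓ := one_lt_pow₀ hk1 (by omega)
  have horth := hbcons.sum_mul_sub_eq_zero_of_minimizer hbmin consistent_depthWeight
  have hweighted : ∑ v, depthWeight k ℓ v * hb v = ∑ v, depthWeight k ℓ v * ht v := by
    simpa only [mul_sub, Finset.sum_sub_distrib, sub_eq_zero] using horth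
  rw [sum_depthWeight_mul hℓ, sum_depthWeight_mul hℓ] at hweighted
  -- The root is written with the fixed proof `hℓ`, so that it is constant in the summation index.
  have hlevel : ∀ d (hd : d < ℓ),
      ∑ j : Fin (k ^ d), hb (mkNode d hd j) = hb (mkNode 0 hℓ ⟨0, by simp⟩) :=
    hbcons.sum_level_eq_root
  simp only [hlevel] at hweighted
  rw [← Finset.sum_mul, geom_sum_eq hk1.ne'] at hweighted
  rw [← hweighted]
  field_simp [(sub_pos.2 hk1).ne', (sub_pos.2 hkℓ).ne']
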